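/- arXiv:2601.09125 — 7 statements merged into one kernel-verified Lean document; each statement's English description precedes it below -/
import Mathlib

section
/- Let n ≥ 0 and define F : ℤ × ℤ → ℕ by F(x,y) = 0 if x < 0 or y < 0, F(0,0) = 2^n, and F(x,y) = ⌊F(x-1,y)/2⌋ + ⌊F(x,y-1)/2⌋ otherwise. Then for all x, y ≥ 0 with x + y ≤ n, we have F(x,y) = 2^{n-x-y} · C(x+y, x), where C denotes the binomial coefficient. -/
/-!
Every site `(a, b)` with `a + b ≤ n` receives an even number of chips from each of its two lower
neighbours, so the rounding in the firing rule never takes effect there and `F` obeys Pascal's rule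
with an extra factor `1/2` per step; induction on `a + b` finishes.
-/

structure IsChipHalving (F : ℤ → ℤ → ℕ) : Prop where
  eq_zero_of_neg : ∀ x y : ℤ, x < 0 ∨ y < 0 → F x y = 0
  eq_half_add_half : ∀ x y : ℤ, 0 ≤ x → 0 ≤ y → ¬(x = 0 ∧ y = 0) →
    F x y = F (x - 1) y / 2 + F x (y - 1) / 2

lemma two_pow_succ_mul_div_two (k c : ℕ) : 2 ^ (k + 1) * c / 2 = 2 ^ k * c := by
  rw [pow_succ, mul_right_comm, Nat.mul_div_cancel _ two_pos]

namespace IsChipHalving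

variable {F : ℤ → ℤ → ℕ}

lemma succ_zero (hF : IsChipHalving F) (a : ℕ) : F (a + 1 : ℕ) (0 : ℕ) = F a (0 : ℕ) / 2 := by
  rw [Nat.cast_zero, hF.eq_half_add_half _ _ (by positivity) le_rfl (by omega),
    hF.eq_zero_of_neg _ (0 - 1) (Or.inr (by norm_num))]
  simp

lemma zero_succ (hF : IsChipHalving F) (b : ℕ) : F (0 : ℕ) (b + 1 : ℕ) = F (0 : ℕ) b / 2 := by
  rw [Nat.cast_zero, hF.eq_half_add_half _ _ le_rfl (by positivity) (by omega),
    hF.eq_zero_of_neg (0 - 1) _ (Or.inl (by norm_num))]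
  simp

lemma succ_succ (hF : IsChipHalving F) (a b : ℕ) :
    F (a + 1 : ℕ) (b + 1 : ℕ) = F a (b + 1 : ℕ) / 2 + F (a + 1 : ℕ) b / 2 := by
  rw [hF.eq_half_add_half _ _ (by positivity) (by positivity) (by omega)]
  simp

theorem eq_two_pow_mul_choose (hF : IsChipHalving F) {n : ℕ} (h00 : F 0 0 = 2 ^ n) :
    ∀ a b : ℕ, a + b ≤ n → F a b = 2 ^ (n - (a + b)) * (a + b).choose a := by
  suffices ∀ s a b : ℕ, a + b = s → s ≤ n → F a b = 2 ^ (n - s) * s.choose a by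
    exact fun a b ↦ this _ a b rfl
  intro s
  induction s with
  | zero =>
    rintro a b hab -
    obtain ⟨rfl, rfl⟩ : a = 0 ∧ b = 0 := by omega
    simpa using h00
  | succ s ih =>
    intro a b hab hs
    have hpow : n - s = n - (s + 1) + 1 := by omega
    rcases a with _ | a <;> rcases b with _ | b
    · omega
    · rw [hF.zero_succ, ih 0 b (by omega) (by omega), hpow, two_pow_succ_mul_div_two]
      simp
    · rw [hF.succ_zero, ih a 0 (by omega) (by omega), hpow, two_pow_succ_mul_div_two]
      simp [show a = s by omega]
    · rw [hF.succ_succ, ih a (b + 1) (by omega) (by omega), ih (a + 1) b (by omega) (by omega),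
        hpow, two_pow_succ_mul_div_two, two_pow_succ_mul_div_two, ← mul_add, Nat.choose_succ_succ]

end IsChipHalving

theorem stmt2 (n : ℕ) (F : ℤ → ℤ → ℕ)
    (hneg : ∀ x y : ℤ, x < 0 ∨ y < 0 → F x y = 0)
    (hzero : F 0 0 = 2 ^ n)
    (hrec : ∀ x y : ℤ, 0 ≤ x → 0 ≤ y → ¬(x = 0 ∧ y = 0) →
      F x y = F (x - 1) y / 2 + F x (y - 1) / 2) :
    ∀ x y : ℤ, 0 ≤ x → 0 ≤ y → x + y ≤ (n : ℤ) →
      F x y = 2 ^ (n - (x + y).toNat) * Nat.choose (x + y).toNat x.toNat := by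
  intro x y hx hy hxy
  lift x to ℕ using hx
  lift y to ℕ using hy
  have hsum : ((x : ℤ) + y).toNat = x + y := by omega
  rw [hsum, Int.toNat_natCast]
  exact IsChipHalving.eq_two_pow_mul_choose ⟨hneg, hrec⟩ hzero x y (by omega)
end

section
/- Let n ≥ 0 and define F as the intermediate firing configuration: F(x,y) = 0 if x < 0 or y < 0, F(0,0) = 2^n, and F(x,y) = ⌊F(x-1,y)/2⌋ + ⌊F(x,y-1)/2⌋ otherwise. Then for every row m with 0 ≤ m < n and every vertex (x, m-x) in row m, the value F(x, m-x) is even; moreover F(0, n) = 1 is odd. Consequently, the closest row to the origin containing chips in the stable configuration (i.e., containing vertices with F odd) is row n. -/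
/-! Unfolding the recursion row by row, `F x y = 2 ^ (n - (x + y)) * C(x + y, x)` on the rows
`x + y ≤ n`: the halvings are exact there because every value on a row below `n` carries a
factor `2`, and the sum of the two halved neighbours is Pascal's rule. Hence rows `m < n` are even,
while `F 0 n = 2 ^ 0 * C(n, 0) = 1`. -/

def latticeBinom (x y : ℤ) : ℕ :=
  if 0 ≤ x ∧ 0 ≤ y then (x + y).toNat.choose x.toNat else 0

lemma latticeBinom_of_neg {x y : ℤ} (h : x < 0 ∨ y < 0) : latticeBinom x y = 0 := by
  rw [latticeBinom, if_neg]
  omega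

lemma latticeBinom_zero_left {y : ℤ} (hy : 0 ≤ y) : latticeBinom 0 y = 1 := by
  simp [latticeBinom, hy]

lemma latticeBinom_zero_right {x : ℤ} (hx : 0 ≤ x) : latticeBinom x 0 = 1 := by
  simp [latticeBinom, hx]

lemma latticeBinom_pascal {x y : ℤ} (hx : 0 ≤ x) (hy : 0 ≤ y) (hxy : ¬(x = 0 ∧ y = 0)) :
    latticeBinom x y = latticeBinom (x - 1) y + latticeBinom x (y - 1) := by
  lift x to ℕ using hx
  lift y to ℕ using hy
  rcases x with _ | a <;> rcases y with _ | b
  · simp at hxy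
  · rw [Nat.cast_zero, latticeBinom_of_neg (x := 0 - 1) (by omega),
      latticeBinom_zero_left (by omega), latticeBinom_zero_left (by omega)]
  · rw [Nat.cast_zero, latticeBinom_of_neg (y := 0 - 1) (by omega),
      latticeBinom_zero_right (by omega), latticeBinom_zero_right (by omega)]
  · have hx : ((a + 1 : ℕ) : ℤ) - 1 = a := by omega
    have hy : ((b + 1 : ℕ) : ℤ) - 1 = b := by omega
    simp only [latticeBinom, hx, hy, Nat.cast_nonneg, and_self, if_true]
    have h₁ : (((a + 1 : ℕ) : ℤ) + ((b + 1 : ℕ) : ℤ)).toNat = (a + b + 1) + 1 := by omega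
    have h₂ : ((a : ℤ) + ((b + 1 : ℕ) : ℤ)).toNat = a + b + 1 := by omega
    have h₃ : (((a + 1 : ℕ) : ℤ) + (b : ℤ)).toNat = a + b + 1 := by omega
    rw [h₁, h₂, h₃, Int.toNat_natCast, Int.toNat_natCast, Nat.choose_succ_succ]

section Firing

variable {n : ℕ} {F : ℤ → ℤ → ℕ}

theorem firing_eq_two_pow_mul_latticeBinom
    (hneg : ∀ x y : ℤ, x < 0 ∨ y < 0 → F x y = 0)
    (hzero : F 0 0 = 2 ^ n)
    (hrec : ∀ x y : ℤ, 0 ≤ x → 0 ≤ y → ¬(x = 0 ∧ y = 0) →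
      F x y = F (x - 1) y / 2 + F x (y - 1) / 2)
    (m : ℕ) (hm : m ≤ n) (x y : ℤ) (hxy : x + y = m) :
    F x y = 2 ^ (n - m) * latticeBinom x y := by
  by_cases hout : x < 0 ∨ y < 0
  · rw [hneg x y hout, latticeBinom_of_neg hout, mul_zero]
  push Not at hout
  induction m generalizing x y with
  | zero =>
    obtain ⟨rfl, rfl⟩ : x = 0 ∧ y = 0 := by omega
    rw [hzero, latticeBinom_zero_left le_rfl, Nat.sub_zero, mul_one]
  | succ m ih =>
    have hbelow : ∀ x' y' : ℤ, x' + y' = m →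
        F x' y' / 2 = 2 ^ (n - (m + 1)) * latticeBinom x' y' := by
      intro x' y' hx'y'
      by_cases hout' : x' < 0 ∨ y' < 0
      · rw [hneg x' y' hout', latticeBinom_of_neg hout', mul_zero, Nat.zero_div]
      push Not at hout'
      rw [ih (by omega) x' y' hx'y' hout', show n - m = n - (m + 1) + 1 by omega,
        two_pow_succ_mul_div_two]
    rw [hrec x y hout.1 hout.2 (by omega), hbelow _ _ (by omega), hbelow _ _ (by omega),
      ← mul_add, ← latticeBinom_pascal hout.1 hout.2 (by omega)]

end Firing

theorem stmt3 (n : ℕ) (F : ℤ → ℤ → ℕ)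
    (hneg : ∀ x y : ℤ, x < 0 ∨ y < 0 → F x y = 0)
    (hzero : F 0 0 = 2 ^ n)
    (hrec : ∀ x y : ℤ, 0 ≤ x → 0 ≤ y → ¬(x = 0 ∧ y = 0) →
      F x y = F (x - 1) y / 2 + F x (y - 1) / 2) :
    (∀ m : ℕ, m < n → ∀ x : ℤ, 0 ≤ x → x ≤ (m : ℤ) → Even (F x ((m : ℤ) - x))) ∧
    F 0 (n : ℤ) = 1 ∧ Odd (F 0 (n : ℤ)) := by
  have hF := firing_eq_two_pow_mul_latticeBinom hneg hzero hrec
  have hcorner : F 0 n = 1 := by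
    rw [hF n le_rfl 0 n (zero_add _), latticeBinom_zero_left (Nat.cast_nonneg n), Nat.sub_self,
      pow_zero, mul_one]
  refine ⟨fun m hm x _ _ ↦ ?_, hcorner, hcorner ▸ odd_one⟩
  rw [hF m hm.le x _ (add_sub_cancel x m), show n - m = n - m - 1 + 1 by omega, pow_succ]
  exact (even_two.mul_left _).mul_right _
end

section
/- Let n ≥ 0 and define F as the intermediate firing configuration with 2^n initial chips (F(x,y) = 0 for x<0 or y<0, F(0,0) = 2^n, F(x,y) = ⌊F(x-1,y)/2⌋ + ⌊F(x,y-1)/2⌋ otherwise). Then for all x ≥ y ≥ 0 with F(x+1,y-1) > 0: if y < x then F(x,y) - F(x+1,y-1) ≥ 2, and if y = x then F(x,x) - F(x+1,x-1) ≥ 1. In particular, reading each row from its leftmost nonzero entry toward the middle, entries strictly increase. -/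
theorem stmt4 (n : ℕ) (F : ℤ → ℤ → ℕ)
    (hneg : ∀ x y : ℤ, x < 0 ∨ y < 0 → F x y = 0)
    (hzero : F 0 0 = 2 ^ n)
    (hrec : ∀ x y : ℤ, 0 ≤ x → 0 ≤ y → ¬(x = 0 ∧ y = 0) →
      F x y = F (x - 1) y / 2 + F x (y - 1) / 2) :
    (∀ x y : ℤ, 0 ≤ y → y < x → 0 < F (x + 1) (y - 1) →
      F (x + 1) (y - 1) + 2 ≤ F x y) ∧
    (∀ x : ℤ, 0 ≤ x → 0 < F (x + 1) (x - 1) →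
      F (x + 1) (x - 1) + 1 ≤ F x x) := by
  -- symmetry
  have hsymm : ∀ x y : ℤ, F x y = F y x := by
    have key : ∀ k : ℕ, ∀ x y : ℤ, x + y = (k : ℤ) → F x y = F y x := by
      intro k
      induction k using Nat.strong_induction_on with
      | _ k ih =>
        intro x y hk
        rcases lt_or_ge x 0 with hx | hx
        · rw [hneg x y (Or.inl hx), hneg y x (Or.inr hx)]
        rcases lt_or_ge y 0 with hy | hy
        · rw [hneg x y (Or.inr hy), hneg y x (Or.inl hy)]
        by_cases h0 : x = 0 ∧ y = 0
        · rw [h0.1, h0.2]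
        · have h0' : ¬(y = 0 ∧ x = 0) := fun h => h0 ⟨h.2, h.1⟩
          have hk1 : 1 ≤ k := by omega
          rw [hrec x y hx hy h0, hrec y x hy hx h0']
          have e1 : F (x - 1) y = F y (x - 1) := ih (k - 1) (by omega) _ _ (by omega)
          have e2 : F x (y - 1) = F (y - 1) x := ih (k - 1) (by omega) _ _ (by omega)
          rw [e1, e2]; omega
    intro x y
    rcases lt_or_ge x 0 with hx | hx
    · rw [hneg x y (Or.inl hx), hneg y x (Or.inr hx)]
    rcases lt_or_ge y 0 with hy | hy
    · rw [hneg x y (Or.inr hy), hneg y x (Or.inl hy)]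
    exact key (x + y).toNat x y (by omega)
  -- diagonal entries are even (for x ≥ 1)
  have hdiag : ∀ x : ℤ, 1 ≤ x → F x x = 2 * (F x (x - 1) / 2) := by
    intro x hx
    rw [hrec x x (by omega) (by omega) (by omega), hsymm (x - 1) x]
    omega
  -- main joint induction on the row index
  have main : ∀ k : ℕ,
      (∀ x y : ℤ, 0 ≤ y → y < x → x + y = (k : ℤ) → 0 < F (x + 1) (y - 1) →
        F (x + 1) (y - 1) + 2 ≤ F x y) ∧
      (∀ x : ℤ, 0 ≤ x → 2 * x = (k : ℤ) → 0 < F (x + 1) (x - 1) →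
        F (x + 1) (x - 1) + 1 ≤ F x x) := by
    intro k
    induction k using Nat.strong_induction_on with
    | _ k ih =>
      constructor
      · intro x y hy hyx hk hpos
        rcases eq_or_lt_of_le hy with hy0 | hy1
        · rw [hneg (x + 1) (y - 1) (Or.inr (by omega))] at hpos; omega
        · -- y ≥ 1, x ≥ 2
          have hx2 : 2 ≤ x := by omega
          have hk3 : 3 ≤ (k : ℤ) := by omega
          have hx1 : F x y = F (x - 1) y / 2 + F x (y - 1) / 2 :=
            hrec x y (by omega) (by omega) (by omega)
          have hx1' : F (x + 1) (y - 1) = F x (y - 1) / 2 + F (x + 1) (y - 2) / 2 := by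
            have := hrec (x + 1) (y - 1) (by omega) (by omega) (by omega)
            simpa [show x + 1 - 1 = x by ring, show y - 1 - 1 = y - 2 by ring] using this
          set a := F (x - 1) y with ha
          set m := F x (y - 1) with hm
          set b := F (x + 1) (y - 2) with hb
          rcases Nat.eq_zero_or_pos b with hb0 | hbpos
          · -- b = 0 : F(x+1)(y-1) = m/2 > 0 so m ≥ 2
            have hm2 : 2 ≤ m := by omega
            rcases eq_or_lt_of_le (show y ≤ x - 1 by omega) with hxy | hxy
            · -- x - 1 = y : use diagonal statement of previous row
              have hB := (ih (k - 1) (by omega)).2 y (by omega)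
                (by push_cast; omega)
              have hB' : m + 1 ≤ a := by
                have e1 : F (y + 1) (y - 1) = m := by rw [hm, show y + 1 = x by omega]
                have e2 : F y y = a := by rw [ha, show x - 1 = y by omega]
                rw [e1, e2] at hB
                exact hB (by omega)
              have hev : a = 2 * (F y (y - 1) / 2) := by
                rw [ha, show x - 1 = y by omega]; exact hdiag y (by omega)
              omega
            · -- x - 1 > y
              have hA := (ih (k - 1) (by omega)).1 (x - 1) y hy (by omega)
                (by push_cast; omega)
              have hA' : m + 2 ≤ a := by
                have : F (x - 1 + 1) (y - 1) = m := by rw [hm]; congr 1; omega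
                rw [this] at hA
                exact hA (by omega)
              omega
          · -- b > 0
            have hA1 := (ih (k - 1) (by omega)).1 x (y - 1) (by omega) (by omega)
              (by push_cast; omega)
            have hA1' : b + 2 ≤ m := by
              have : F (x + 1) (y - 1 - 1) = b := by rw [hb]; congr 1; omega
              rw [this] at hA1
              exact hA1 (by omega)
            rcases eq_or_lt_of_le (show y ≤ x - 1 by omega) with hxy | hxy
            · -- x - 1 = y, use diagonal statement and evenness
              have hB := (ih (k - 1) (by omega)).2 y (by omega) (by push_cast; omega)
              have hB' : m + 1 ≤ a := by
                have e1 : F (y + 1) (y - 1) = m := by rw [hm, show y + 1 = x by omega]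
                have e2 : F y y = a := by rw [ha, show x - 1 = y by omega]
                rw [e1, e2] at hB
                exact hB (by omega)
              have hev : a = 2 * (F y (y - 1) / 2) := by
                rw [ha, show x - 1 = y by omega]; exact hdiag y (by omega)
              omega
            · have hA2 := (ih (k - 1) (by omega)).1 (x - 1) y hy (by omega)
                (by push_cast; omega)
              have hA2' : m + 2 ≤ a := by
                have : F (x - 1 + 1) (y - 1) = m := by rw [hm]; congr 1; omega
                rw [this] at hA2
                exact hA2 (by omega)
              omega
      · intro x hx hk hpos
        rcases eq_or_lt_of_le hx with hx0 | hx1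
        · rw [hneg (x + 1) (x - 1) (Or.inr (by omega))] at hpos; omega
        · have hd : F x x = 2 * (F x (x - 1) / 2) := hdiag x (by omega)
          have hx1' : F (x + 1) (x - 1) = F x (x - 1) / 2 + F (x + 1) (x - 2) / 2 := by
            have := hrec (x + 1) (x - 1) (by omega) (by omega) (by omega)
            simpa [show x + 1 - 1 = x by ring, show x - 1 - 1 = x - 2 by ring] using this
          set m := F x (x - 1) with hm
          set b := F (x + 1) (x - 2) with hb
          rcases Nat.eq_zero_or_pos b with hb0 | hbpos
          · omega
          · have hA := (ih (k - 1) (by omega)).1 x (x - 1) (by omega) (by omega)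
              (by push_cast; omega)
            have hA' : b + 2 ≤ m := by
              have : F (x + 1) (x - 1 - 1) = b := by rw [hb]; congr 1; omega
              rw [this] at hA
              exact hA (by omega)
            omega
  constructor
  · intro x y hy hyx hpos
    exact (main (x + y).toNat).1 x y hy hyx (by omega) hpos
  · intro x hx hpos
    exact (main (2 * x).toNat).2 x hx (by omega) hpos
end

section
/- Let F be the intermediate firing configuration with 2^n initial chips. Suppose the leftmost nonzero entry of row i is F(x,y) = 1 and the next entry satisfies 4 ≤ F(x-1,y+1) ≤ 7. Then the leftmost nonzero entry of row i+2 is F(x+1,y+1) = 1; in particular, rows i and i+2 have the same number of nonzero entries. -/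
/-!
The table `F` is symmetric, and along each antidiagonal (row) its entries weakly increase
towards the diagonal. Hence a row is nonzero exactly between its leftmost nonzero entry `(x, y)`
and the mirror image `(y, x)`. An entry `≤ 1` contributes nothing to the next row, so rows
`i + 1` and `i + 2` vanish below height `y + 1`, and
`F (x + 1) (y + 1) = ⌊⌊F (x - 1) (y + 1) / 2⌋ / 2⌋ = 1` is the leftmost nonzero
entry of row `i + 2`.
-/

open Finset

structure IsHalvingTable (F : ℤ → ℤ → ℕ) : Prop where
  eq_zero_of_neg : ∀ x y : ℤ, x < 0 ∨ y < 0 → F x y = 0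
  eq_div_two_add_div_two : ∀ x y : ℤ, 0 ≤ x → 0 ≤ y → ¬(x = 0 ∧ y = 0) →
    F x y = F (x - 1) y / 2 + F x (y - 1) / 2

namespace IsHalvingTable

variable {F : ℤ → ℤ → ℕ}

theorem nonneg_of_ne_zero (hF : IsHalvingTable F) {x y : ℤ} (h : F x y ≠ 0) :
    0 ≤ x ∧ 0 ≤ y := by
  by_contra! hneg
  exact h (hF.eq_zero_of_neg x y (by omega))

theorem symm (hF : IsHalvingTable F) (x y : ℤ) : F x y = F y x := by
  rcases lt_or_ge x 0 with hx | hx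
  · rw [hF.eq_zero_of_neg _ _ (.inl hx), hF.eq_zero_of_neg _ _ (.inr hx)]
  rcases lt_or_ge y 0 with hy | hy
  · rw [hF.eq_zero_of_neg _ _ (.inr hy), hF.eq_zero_of_neg _ _ (.inl hy)]
  by_cases h0 : x = 0 ∧ y = 0
  · rw [h0.1, h0.2]
  rw [hF.eq_div_two_add_div_two x y hx hy h0,
    hF.eq_div_two_add_div_two y x hy hx (by omega), hF.symm (x - 1) y, hF.symm x (y - 1)]
  omega
termination_by (x + y).toNat

theorem apply_le_apply_sub_one_add_one (hF : IsHalvingTable F) {x y : ℤ} (hy : 0 ≤ y)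
    (hyx : y < x) : F x y ≤ F (x - 1) (y + 1) := by
  rcases eq_or_lt_of_le (show y + 1 ≤ x by omega) with rfl | hyx
  · rw [add_sub_cancel_right, hF.symm]
  have hlow : F x (y - 1) ≤ F (x - 2) (y + 1) := by
    rcases eq_or_lt_of_le hy with hy₀ | hy₀
    · rw [hF.eq_zero_of_neg x (y - 1) (.inr (by omega))]
      exact Nat.zero_le _
    calc F x (y - 1) ≤ F (x - 1) (y - 1 + 1) :=
          hF.apply_le_apply_sub_one_add_one (by omega) (by omega)
      _ = F (x - 1) y := by rw [sub_add_cancel]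
      _ ≤ F (x - 1 - 1) (y + 1) := hF.apply_le_apply_sub_one_add_one hy (by omega)
      _ = F (x - 2) (y + 1) := by rw [sub_sub]; norm_num
  rw [hF.eq_div_two_add_div_two x y (by omega) hy (by omega),
    hF.eq_div_two_add_div_two (x - 1) (y + 1) (by omega) (by omega) (by omega),
    show x - 1 - 1 = x - 2 by ring, add_sub_cancel_right]
  have := Nat.div_le_div_right (c := 2) hlow
  omega
termination_by (x + y).toNat

theorem apply_le_apply_of_le_of_le (hF : IsHalvingTable F) {x y a b : ℤ} (hy : 0 ≤ y)
    (hya : y ≤ a) (hyb : y ≤ b) (hab : a + b = x + y) : F x y ≤ F a b := by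
  have key : ∀ b, y ≤ b → ∀ a, b ≤ a → a + b = x + y → F x y ≤ F a b := by
    intro b hyb
    induction b, hyb using Int.leInduction with
    | base => intro a _ hab; rw [show a = x by omega]
    | succ b hyb ih =>
      intro a hba hab
      calc F x y ≤ F (a + 1) b := ih (a + 1) (by omega) (by omega)
        _ ≤ F (a + 1 - 1) (b + 1) := hF.apply_le_apply_sub_one_add_one (by omega) (by omega)
        _ = F a (b + 1) := by rw [add_sub_cancel_right]
  rcases le_total b a with hba | hab'
  · exact key b hyb a hba hab
  · rw [hF.symm a b]
    exact key a hya b hab' (by omega)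

theorem apply_ne_zero_iff_of_leftmost (hF : IsHalvingTable F) {s x y : ℤ} (hxy : x + y = s)
    (hne : F x y ≠ 0) (hleft : ∀ a b : ℤ, a + b = s → b < y → F a b = 0) (a : ℤ) :
    F a (s - a) ≠ 0 ↔ y ≤ a ∧ a ≤ x := by
  have hy := (hF.nonneg_of_ne_zero hne).2
  constructor
  · intro ha
    refine ⟨?_, ?_⟩ <;> by_contra! h
    · exact ha (by rw [hF.symm]; exact hleft (s - a) a (by ring) h)
    · exact ha (hleft a (s - a) (by ring) (by omega))
  · rintro ⟨hya, hax⟩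
    have := hF.apply_le_apply_of_le_of_le (x := x) hy hya (show y ≤ s - a by omega) (by omega)
    omega

theorem eq_zero_of_prev_row_le_one (hF : IsHalvingTable F) {s : ℕ} {y : ℤ}
    (h : ∀ a b : ℤ, a + b = s → b < y → F a b ≤ 1) :
    ∀ a b : ℤ, a + b = s + 1 → b < y → F a b = 0 := by
  intro a b hab hb
  rcases lt_or_ge a 0 with ha | ha
  · exact hF.eq_zero_of_neg a b (.inl ha)
  rcases lt_or_ge b 0 with hb' | hb'
  · exact hF.eq_zero_of_neg a b (.inr hb')
  have h₁ := h (a - 1) b (by omega) hb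
  have h₂ := h a (b - 1) (by omega) (by omega)
  rw [hF.eq_div_two_add_div_two a b ha hb' (by omega)]
  omega

end IsHalvingTable

theorem Finset.filter_range_eq_Icc {m lo hi : ℕ} {P : ℕ → Prop} [DecidablePred P]
    (hhi : hi < m) (h : ∀ a < m, P a ↔ lo ≤ a ∧ a ≤ hi) :
    (range m).filter P = Icc lo hi := by
  ext a
  simp only [mem_filter, mem_range, mem_Icc]
  constructor
  · rintro ⟨ham, hPa⟩
    exact (h a ham).1 hPa
  · rintro ⟨hla, hah⟩
    exact ⟨by omega, (h a (by omega)).2 ⟨hla, hah⟩⟩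

theorem stmt6_general (i : ℕ) (F : ℤ → ℤ → ℕ)
    (hneg : ∀ x y : ℤ, x < 0 ∨ y < 0 → F x y = 0)
    (hrec : ∀ x y : ℤ, 0 ≤ x → 0 ≤ y → ¬(x = 0 ∧ y = 0) →
      F x y = F (x - 1) y / 2 + F x (y - 1) / 2)
    (x y : ℤ) (hxy : x + y = (i : ℤ))
    (hone : F x y = 1)
    (hleftmost : ∀ x' y' : ℤ, x' + y' = (i : ℤ) → y' < y → F x' y' = 0)
    (ha : 4 ≤ F (x - 1) (y + 1)) (hb : F (x - 1) (y + 1) ≤ 7) :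
    F (x + 1) (y + 1) = 1 ∧
    (∀ x' y' : ℤ, x' + y' = (i : ℤ) + 2 → y' < y + 1 → F x' y' = 0) ∧
    ((Finset.range (i + 1)).filter
        (fun a : ℕ => F (a : ℤ) ((i : ℤ) - a) ≠ 0)).card =
      ((Finset.range (i + 3)).filter
        (fun a : ℕ => F (a : ℤ) ((i : ℤ) + 2 - a) ≠ 0)).card := by
  have hF : IsHalvingTable F := ⟨hneg, hrec⟩
  obtain ⟨hx, hy⟩ := hF.nonneg_of_ne_zero (x := x) (y := y) (by omega)
  have hrow₁ := hF.eq_zero_of_prev_row_le_one (s := i) (y := y + 1) fun a b hab hb => by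
    rcases lt_or_eq_of_le (Int.lt_add_one_iff.1 hb) with hb | rfl
    · exact (hleftmost a b hab hb).trans_le zero_le_one
    · rw [show a = x by omega, hone]
  have hrow₂ : ∀ a b : ℤ, a + b = i + 2 → b < y + 1 → F a b = 0 := by
    have := hF.eq_zero_of_prev_row_le_one (s := i + 1) (y := y + 1) fun a b hab hb =>
      (hrow₁ a b (by push_cast at hab; omega) hb).trans_le zero_le_one
    exact fun a b hab hb => this a b (by push_cast; omega) hb
  have hnext : F (x + 1) (y + 1) = 1 := by
    have h₁ := hF.eq_div_two_add_div_two x (y + 1) hx (by omega) (by omega)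
    have h₂ := hF.eq_div_two_add_div_two (x + 1) (y + 1) (by omega) (by omega) (by omega)
    have h₃ := hrow₁ (x + 1) y (by omega) (by omega)
    simp only [add_sub_cancel_right, hone] at h₁ h₂
    omega
  refine ⟨hnext, hrow₂, ?_⟩
  have hsupp₁ := hF.apply_ne_zero_iff_of_leftmost hxy (by omega) hleftmost
  have hsupp₂ :=
    hF.apply_ne_zero_iff_of_leftmost (s := i + 2) (x := x + 1) (by omega) (by omega) hrow₂
  lift x to ℕ using hx
  lift y to ℕ using hy
  rw [filter_range_eq_Icc (lo := y) (hi := x) (by omega) fun a _ => by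
      rw [hsupp₁]; norm_cast,
    filter_range_eq_Icc (lo := y + 1) (hi := x + 1) (by omega) fun a _ => by
      rw [hsupp₂]; norm_cast]
  simp only [Nat.card_Icc]
  omega

theorem stmt6 (n i : ℕ) (F : ℤ → ℤ → ℕ)
    (hneg : ∀ x y : ℤ, x < 0 ∨ y < 0 → F x y = 0)
    (hzero : F 0 0 = 2 ^ n)
    (hrec : ∀ x y : ℤ, 0 ≤ x → 0 ≤ y → ¬(x = 0 ∧ y = 0) →
      F x y = F (x - 1) y / 2 + F x (y - 1) / 2)
    (x y : ℤ) (h0y : 0 ≤ y) (hxy : x + y = (i : ℤ))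
    (hone : F x y = 1)
    (hleftmost : ∀ x' y' : ℤ, x' + y' = (i : ℤ) → y' < y → F x' y' = 0)
    (ha : 4 ≤ F (x - 1) (y + 1)) (hb : F (x - 1) (y + 1) ≤ 7) :
    F (x + 1) (y + 1) = 1 ∧
    (∀ x' y' : ℤ, x' + y' = (i : ℤ) + 2 → y' < y + 1 → F x' y' = 0) ∧
    ((Finset.range (i + 1)).filter
        (fun a : ℕ => F (a : ℤ) ((i : ℤ) - a) ≠ 0)).card =
      ((Finset.range (i + 3)).filter
        (fun a : ℕ => F (a : ℤ) ((i : ℤ) + 2 - a) ≠ 0)).card :=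
  stmt6_general i F hneg hrec x y hxy hone hleftmost ha hb
end

section
/- Let n ≥ 2 be even and let F be the intermediate firing configuration with 2^n initial chips. Then F(n/2 + C(n, n/2)/2, n/2 + C(n, n/2)/2) = 0; consequently every entry of row n + C(n, n/2) + 1 of F is zero, so the chip-firing process with 2^n chips at the origin terminates. -/
/-!
The configuration is symmetric, and along each row its entries grow weakly towards the diagonal;
so a row whose central entry vanishes is zero, and then so is the next row. Up to row `n` no chip
is lost to rounding, `F x y = 2 ^ (n - x - y) * C(x + y, x)`, so row `n` is the `n`-th row of
Pascal's triangle, whose entries `≥ 2` increase by at least 2 towards the middle. From row `n`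
on, this persists for the halves: `F x y / 2 < F (x + 1) (y - 1) / 2` whenever `x + 2 ≤ y` and
`F x y ≥ 2`. Hence the even diagonal entries, starting from `F (n/2) (n/2) = C(n, n/2)`, drop by
at least 2 per step until they vanish, which happens after at most `C(n, n/2) / 2` steps.
-/

theorem Nat.self_le_choose_of_two_mul_le {n a : ℕ} (ha : 0 < a) (h : 2 * a ≤ n) :
    n ≤ n.choose a := by
  induction a, ha using Nat.le_induction with
  | base => simp
  | succ a ha ih =>
    exact (ih (by omega)).trans (Nat.choose_le_succ_of_lt_half_left (by omega))

theorem Nat.choose_add_two_le_choose_succ {n a : ℕ} (ha : 0 < a) (h : 2 * a + 2 ≤ n) :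
    n.choose a + 2 ≤ n.choose (a + 1) := by
  have hrec := Nat.choose_succ_right_eq n a
  have hn := Nat.self_le_choose_of_two_mul_le (n := n) ha (by omega)
  have hgrow : n.choose a * (a + 2) ≤ n.choose a * (n - a) := Nat.mul_le_mul_left _ (by omega)
  nlinarith

structure IsFiringConfig (F : ℤ → ℤ → ℕ) : Prop where
  eq_zero_of_neg : ∀ x y : ℤ, x < 0 ∨ y < 0 → F x y = 0
  eq_half_add_half : ∀ x y : ℤ, 0 ≤ x → 0 ≤ y → ¬(x = 0 ∧ y = 0) →
    F x y = F (x - 1) y / 2 + F x (y - 1) / 2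

namespace IsFiringConfig

variable {F : ℤ → ℤ → ℕ} (hF : IsFiringConfig F)
include hF

theorem symm (x y : ℤ) : F x y = F y x := by
  rcases lt_or_ge x 0 with hx | hx
  · rw [hF.eq_zero_of_neg x y (.inl hx), hF.eq_zero_of_neg y x (.inr hx)]
  rcases lt_or_ge y 0 with hy | hy
  · rw [hF.eq_zero_of_neg x y (.inr hy), hF.eq_zero_of_neg y x (.inl hy)]
  by_cases h0 : x = 0 ∧ y = 0
  · rw [h0.1, h0.2]
  rw [hF.eq_half_add_half x y hx hy h0, hF.eq_half_add_half y x hy hx (by omega),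
    symm (x - 1) y, symm x (y - 1), add_comm]
termination_by (x + y).toNat
decreasing_by all_goals omega

theorem le_add_one_sub_one {x y : ℤ} (hxy : x < y) : F x y ≤ F (x + 1) (y - 1) := by
  rcases lt_or_ge x 0 with hx | hx
  · simp [hF.eq_zero_of_neg x y (.inl hx)]
  rcases eq_or_lt_of_le (Int.add_one_le_of_lt hxy) with rfl | hxy
  · rw [add_sub_cancel_right, hF.symm]
  have h₁ : F (x - 1) y ≤ F x (y - 1) := by
    simpa using le_add_one_sub_one (x := x - 1) (y := y) (by omega)
  have h₂ : F x (y - 1) ≤ F (x + 1) (y - 1 - 1) := le_add_one_sub_one (by omega)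
  rw [hF.eq_half_add_half x y hx (by omega) (by omega),
    hF.eq_half_add_half (x + 1) (y - 1) (by omega) (by omega) (by omega), add_sub_cancel_right,
    add_comm (F x (y - 1) / 2)]
  exact Nat.add_le_add_right (Nat.div_le_div_right (h₁.trans h₂)) _
termination_by (x + y).toNat
decreasing_by all_goals omega

theorem le_diag_of_le {x m : ℤ} (h : x ≤ m) : F x (2 * m - x) ≤ F m m := by
  rcases eq_or_lt_of_le h with rfl | h
  · rw [two_mul, add_sub_cancel_right]
  calc F x (2 * m - x) ≤ F (x + 1) (2 * m - x - 1) := hF.le_add_one_sub_one (by omega)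
    _ = F (x + 1) (2 * m - (x + 1)) := by rw [sub_sub]
    _ ≤ F m m := le_diag_of_le (by omega)
termination_by (m - x).toNat
decreasing_by omega

theorem row_eq_zero_of_diag_eq_zero {m : ℤ} (h : F m m = 0) {x y : ℤ} (hxy : x + y = 2 * m) :
    F x y = 0 := by
  rcases le_total x m with hx | hx
  · obtain rfl : y = 2 * m - x := by omega
    exact Nat.eq_zero_of_le_zero (h ▸ hF.le_diag_of_le hx)
  · obtain rfl : x = 2 * m - y := by omega
    rw [hF.symm]
    exact Nat.eq_zero_of_le_zero (h ▸ hF.le_diag_of_le (by omega))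

theorem row_succ_eq_zero {s : ℤ} (hs : 0 ≤ s) (h : ∀ x y, x + y = s → F x y = 0) {x y : ℤ}
    (hxy : x + y = s + 1) : F x y = 0 := by
  by_cases hneg : x < 0 ∨ y < 0
  · exact hF.eq_zero_of_neg x y hneg
  rw [hF.eq_half_add_half x y (by omega) (by omega) (by omega), h _ _ (by omega),
    h _ _ (by omega)]

theorem eq_two_pow_mul_choose {n : ℕ} (h0 : F 0 0 = 2 ^ n) :
    ∀ x y : ℕ, x + y ≤ n → F x y = 2 ^ (n - (x + y)) * (x + y).choose x
  | 0, 0, _ => by simpa using h0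
  | x + 1, 0, hn => by
    have ih := eq_two_pow_mul_choose h0 x 0 (by omega)
    push_cast at ih ⊢
    rw [hF.eq_half_add_half _ _ (by omega) le_rfl (by omega), add_sub_cancel_right, ih,
      hF.eq_zero_of_neg _ _ (.inr (by norm_num)), Nat.add_zero, Nat.add_zero,
      show n - x = n - (x + 1) + 1 by omega]
    simp [pow_succ]
  | 0, y + 1, hn => by
    have ih := eq_two_pow_mul_choose h0 0 y (by omega)
    push_cast at ih ⊢
    rw [hF.eq_half_add_half _ _ le_rfl (by omega) (by omega), add_sub_cancel_right, ih,
      hF.eq_zero_of_neg _ _ (.inl (by norm_num)), Nat.zero_add, Nat.zero_add,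
      show n - y = n - (y + 1) + 1 by omega]
    simp [pow_succ]
  | x + 1, y + 1, hn => by
    have ih₁ := eq_two_pow_mul_choose h0 x (y + 1) (by omega)
    have ih₂ := eq_two_pow_mul_choose h0 (x + 1) y (by omega)
    push_cast at ih₁ ih₂ ⊢
    rw [hF.eq_half_add_half _ _ (by omega) (by omega) (by omega), add_sub_cancel_right,
      add_sub_cancel_right, ih₁, ih₂, show x + 1 + (y + 1) = x + (y + 1) + 1 by omega,
      Nat.choose_succ_succ, show x + (y + 1) = x + 1 + y by omega,
      show n - (x + 1 + y) = n - (x + 1 + y + 1) + 1 by omega]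
    simp [pow_succ, mul_assoc, mul_left_comm _ 2, mul_add]

theorem eq_choose_of_add_eq {n : ℕ} (h0 : F 0 0 = 2 ^ n) {x y : ℤ} (hx : 0 ≤ x) (hy : 0 ≤ y)
    (hs : x + y = n) : F x y = n.choose x.toNat := by
  lift x to ℕ using hx
  lift y to ℕ using hy
  have hs : x + y = n := by omega
  rw [hF.eq_two_pow_mul_choose h0 x y hs.le, hs, Nat.sub_self, pow_zero, one_mul, Int.toNat_natCast]

theorem half_lt_half_add_one_sub_one {n : ℕ} (h0 : F 0 0 = 2 ^ n) {x y : ℤ} (hs : n ≤ x + y)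
    (hxy : x + 2 ≤ y) (h2 : 2 ≤ F x y) : F x y / 2 < F (x + 1) (y - 1) / 2 := by
  have hx : 0 ≤ x := by
    by_contra hx
    rw [hF.eq_zero_of_neg x y (.inl (by omega))] at h2
    omega
  rcases eq_or_lt_of_le hs with hs | hs
  · rw [hF.eq_choose_of_add_eq h0 hx (by omega) hs.symm] at h2 ⊢
    rw [hF.eq_choose_of_add_eq h0 (by omega) (by omega) (by omega),
      show (x + 1).toNat = x.toNat + 1 by omega]
    have hx : 0 < x.toNat := by
      by_contra hx
      rw [Nat.eq_zero_of_not_pos hx, Nat.choose_zero_right] at h2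
      omega
    have := Nat.choose_add_two_le_choose_succ (n := n) hx (by omega)
    omega
  · have hu : F (x - 1) y / 2 = 0 ∨ F (x - 1) y / 2 < F x (y - 1) / 2 := by
      by_cases hu : 2 ≤ F (x - 1) y
      · right
        simpa using half_lt_half_add_one_sub_one h0 (x := x - 1) (y := y) (by omega) (by omega) hu
      · omega
    have hv : x + 3 ≤ y → F x (y - 1) / 2 = 0 ∨ F x (y - 1) / 2 < F (x + 1) (y - 2) / 2 := by
      intro hxy
      by_cases hv : 2 ≤ F x (y - 1)
      · right
        simpa [sub_sub] using half_lt_half_add_one_sub_one h0 (x := x) (y := y - 1) (by omega)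
          (by omega) hv
      · omega
    have hw : y = x + 2 → F (x + 1) (y - 2) = F x (y - 1) := by
      rintro rfl
      rw [show x + 2 - 2 = x by ring, show x + 2 - 1 = x + 1 by ring, hF.symm]
    rw [hF.eq_half_add_half x y hx (by omega) (by omega)] at h2 ⊢
    rw [hF.eq_half_add_half (x + 1) (y - 1) (by omega) (by omega) (by omega), add_sub_cancel_right,
      sub_sub, one_add_one_eq_two]
    omega
termination_by (x + y - n).toNat
decreasing_by all_goals omega

theorem diag_eq_two_mul {m : ℤ} (hm : 0 < m) : F m m = 2 * (F (m - 1) m / 2) := by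
  rw [hF.eq_half_add_half m m hm.le hm.le (by omega), hF.symm m (m - 1), two_mul]

theorem diag_succ_le {n : ℕ} (h0 : F 0 0 = 2 ^ n) {m : ℤ} (hm : 0 < m) (hn : n ≤ 2 * m) :
    F (m + 1) (m + 1) ≤ F m m - 2 := by
  have hnext : F m (m + 1) = F (m - 1) (m + 1) / 2 + F m m / 2 := by
    simpa using hF.eq_half_add_half m (m + 1) hm.le (by omega) (by omega)
  have hlt : F (m - 1) (m + 1) / 2 < F m m / 2 ∨ F m m = 0 := by
    by_cases h2 : 2 ≤ F (m - 1) (m + 1)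
    · left
      simpa using hF.half_lt_half_add_one_sub_one h0 (x := m - 1) (y := m + 1) (by omega)
        (by omega) h2
    · have := hF.diag_eq_two_mul hm
      omega
  have heven := hF.diag_eq_two_mul (m := m + 1) (by omega)
  rw [add_sub_cancel_right] at heven
  have hmono : F (m - 1) (m + 1) ≤ F m m := by
    simpa using hF.le_add_one_sub_one (x := m - 1) (y := m + 1) (by omega)
  omega

theorem diag_add_le {k : ℕ} (hk : 0 < k) (h0 : F 0 0 = 2 ^ (2 * k)) (j : ℕ) :
    F (k + j) (k + j) ≤ (2 * k).choose k - 2 * j := by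
  induction j with
  | zero =>
    simpa using (hF.eq_choose_of_add_eq h0 (x := k) (y := k) (by omega) (by omega) (by omega)).le
  | succ j ih =>
    have := hF.diag_succ_le h0 (m := k + j) (by omega) (by omega)
    push_cast
    rw [← add_assoc]
    omega

end IsFiringConfig

theorem stmt8 (n : ℕ) (hn : 2 ≤ n) (heven : Even n) (F : ℤ → ℤ → ℕ)
    (hneg : ∀ x y : ℤ, x < 0 ∨ y < 0 → F x y = 0)
    (hzero : F 0 0 = 2 ^ n)
    (hrec : ∀ x y : ℤ, 0 ≤ x → 0 ≤ y → ¬(x = 0 ∧ y = 0) →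
      F x y = F (x - 1) y / 2 + F x (y - 1) / 2) :
    F ((n / 2 : ℕ) + (Nat.choose n (n / 2) / 2 : ℕ))
      ((n / 2 : ℕ) + (Nat.choose n (n / 2) / 2 : ℕ)) = 0 ∧
    ∀ x y : ℤ, x + y = (n : ℤ) + (Nat.choose n (n / 2) : ℤ) + 1 → F x y = 0 := by
  have hF : IsFiringConfig F := ⟨hneg, hrec⟩
  obtain ⟨k, rfl⟩ := heven
  have hk : 0 < k := by omega
  rw [← two_mul] at hzero ⊢
  rw [Nat.mul_div_cancel_left k two_pos]
  have hC : 2 ∣ (2 * k).choose k :=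
    Nat.centralBinom_eq_two_mul_choose k ▸ Nat.two_dvd_centralBinom_of_one_le hk
  have hdiag := Nat.eq_zero_of_le_zero
    ((hF.diag_add_le hk hzero ((2 * k).choose k / 2)).trans (by omega))
  exact ⟨hdiag, fun x y hxy => hF.row_succ_eq_zero (by positivity)
    (fun _ _ => hF.row_eq_zero_of_diag_eq_zero hdiag) (by omega)⟩
end

section
/- Let a, b, c be natural numbers with either a ≤ b ≤ c or a ≥ b ≥ c or (b ≥ a and b ≥ c and a = c). Then ⌊c/2⌋ - ⌊a/2⌋ ≤ max(b - a, c - b), where the subtractions and floors are computed in ℤ. Consequently, for the intermediate firing configuration F of quadrant-lattice chip-firing and its difference table F'(x,y) = F(x-1,y) - F(x,y-1), the maximum absolute value of the entries of F' in each row is weakly decreasing from row to row, i.e., |F'(x,y)| ≤ max(|F'(x-1,y)|, |F'(x,y-1)|) whenever the three consecutive row-(x+y-2) entries of F involved satisfy one of the monotonicity/symmetry patterns above. -/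
/-!
For consecutive row entries `a, b, c` of `F`, the entries of `F'` above are `b - a` and `c - b`,
while the entry below is `⌊c/2⌋ - ⌊a/2⌋`, since the next row of `F` holds `⌊a/2⌋ + ⌊b/2⌋` and
`⌊b/2⌋ + ⌊c/2⌋`. For a monotone or symmetric-peak triple, `⌊c/2⌋ - ⌊a/2⌋ ≤ max (b - a) (c - b)`
by a case check; applying this also to the reversed triple `c, b, a` bounds `|⌊c/2⌋ - ⌊a/2⌋|`.
-/

def IsMonotoneOrSymmetricPeak (a b c : ℤ) : Prop :=
  (a ≤ b ∧ b ≤ c) ∨ (c ≤ b ∧ b ≤ a) ∨ (a ≤ b ∧ c ≤ b ∧ a = c)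

namespace IsMonotoneOrSymmetricPeak

variable {a b c : ℤ}

theorem swap (h : IsMonotoneOrSymmetricPeak a b c) : IsMonotoneOrSymmetricPeak c b a := by
  unfold IsMonotoneOrSymmetricPeak at h ⊢
  omega

theorem ediv_two_sub_ediv_two_le_max (h : IsMonotoneOrSymmetricPeak a b c) :
    c / 2 - a / 2 ≤ max (b - a) (c - b) := by
  rw [le_max_iff]
  rcases h with ⟨_, _⟩ | ⟨_, _⟩ | ⟨_, _, rfl⟩ <;> omega

theorem abs_ediv_two_sub_ediv_two_le_max (h : IsMonotoneOrSymmetricPeak a b c) :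
    |c / 2 - a / 2| ≤ max |c - b| |b - a| := by
  rw [abs_sub_le_iff]
  constructor
  · calc c / 2 - a / 2 ≤ max (b - a) (c - b) := h.ediv_two_sub_ediv_two_le_max
      _ ≤ max |c - b| |b - a| := by
        rw [max_comm]
        exact max_le_max (le_abs_self _) (le_abs_self _)
  · calc a / 2 - c / 2 ≤ max (b - c) (a - b) := h.swap.ediv_two_sub_ediv_two_le_max
      _ ≤ max |c - b| |b - a| := by
        rw [abs_sub_comm c b, abs_sub_comm b a]
        exact max_le_max (le_abs_self _) (le_abs_self _)

end IsMonotoneOrSymmetricPeak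

theorem stmt12 :
    (∀ a b c : ℕ,
      ((a ≤ b ∧ b ≤ c) ∨ (c ≤ b ∧ b ≤ a) ∨ (a ≤ b ∧ c ≤ b ∧ a = c)) →
      (c : ℤ) / 2 - (a : ℤ) / 2 ≤ max ((b : ℤ) - (a : ℤ)) ((c : ℤ) - (b : ℤ))) ∧
    (∀ n : ℕ, ∀ F : ℤ → ℤ → ℕ,
      (∀ x y : ℤ, x < 0 ∨ y < 0 → F x y = 0) →
      F 0 0 = 2 ^ n →
      (∀ x y : ℤ, 0 ≤ x → 0 ≤ y → ¬(x = 0 ∧ y = 0) →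
        F x y = F (x - 1) y / 2 + F x (y - 1) / 2) →
      ∀ F' : ℤ → ℤ → ℤ,
      (∀ x y : ℤ, F' x y = (F (x - 1) y : ℤ) - (F x (y - 1) : ℤ)) →
      ∀ x y : ℤ, 1 ≤ x → 1 ≤ y →
      ((F x (y - 2) ≤ F (x - 1) (y - 1) ∧ F (x - 1) (y - 1) ≤ F (x - 2) y) ∨
       (F (x - 2) y ≤ F (x - 1) (y - 1) ∧ F (x - 1) (y - 1) ≤ F x (y - 2)) ∨
       (F x (y - 2) ≤ F (x - 1) (y - 1) ∧ F (x - 2) y ≤ F (x - 1) (y - 1) ∧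
         F x (y - 2) = F (x - 2) y)) →
      |F' x y| ≤ max |F' (x - 1) y| |F' x (y - 1)|) := by
  refine ⟨fun a b c h ↦ IsMonotoneOrSymmetricPeak.ediv_two_sub_ediv_two_le_max (by
    unfold IsMonotoneOrSymmetricPeak; omega), ?_⟩
  intro n F _ _ hstep F' hF' x y hx hy hshape
  have hx2 : x - 1 - 1 = x - 2 := by ring
  have hy2 : y - 1 - 1 = y - 2 := by ring
  have hrow : IsMonotoneOrSymmetricPeak (F x (y - 2)) (F (x - 1) (y - 1)) (F (x - 2) y) := by
    unfold IsMonotoneOrSymmetricPeak; omega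
  have hleft := hstep (x - 1) y (by omega) (by omega) (by omega)
  have hright := hstep x (y - 1) (by omega) (by omega) (by omega)
  rw [hx2] at hleft
  rw [hy2] at hright
  rw [hF', hF', hF', hx2, hy2, hleft, hright]
  convert hrow.abs_ediv_two_sub_ediv_two_le_max using 2
  push_cast
  ring
end

section
/- Let n ≥ 1 and let F be the intermediate firing configuration with 2^n initial chips. Suppose row i is nonzero and has an odd number of nonzero entries. Then the unique central entry F(k,k) (where row i = 2k) is even, strictly larger than every other entry in its row, and at least 2, so row i+1 is nonzero. Consequently, the last nonzero row of F has an even number of nonzero entries, and (since row lengths change by exactly ±1 between consecutive rows starting from the single entry in row 0) the total number of nonzero rows of F is even. -/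
theorem aux_symm (F : ℤ → ℤ → ℕ)
    (hneg : ∀ x y : ℤ, x < 0 ∨ y < 0 → F x y = 0)
    (hrec : ∀ x y : ℤ, 0 ≤ x → 0 ≤ y → ¬(x = 0 ∧ y = 0) →
      F x y = F (x - 1) y / 2 + F x (y - 1) / 2) :
    ∀ x y : ℤ, F x y = F y x := by
  have key : ∀ s : ℕ, ∀ x y : ℤ, 0 ≤ x → 0 ≤ y → x + y = s → F x y = F y x := by
    intro s
    induction s using Nat.strong_induction_on with
    | _ s ih =>
      intro x y hx hy hs
      by_cases h0 : x = 0 ∧ y = 0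
      · obtain ⟨h1, h2⟩ := h0; subst h1; subst h2; rfl
      · have hs1 : 1 ≤ s := by omega
        have e1 : F (x - 1) y = F y (x - 1) := by
          rcases eq_or_lt_of_le hx with h | h
          · rw [hneg _ _ (Or.inl (by omega)), hneg _ _ (Or.inr (by omega))]
          · exact ih (s - 1) (by omega) (x - 1) y (by omega) hy (by omega)
        have e2 : F x (y - 1) = F (y - 1) x := by
          rcases eq_or_lt_of_le hy with h | h
          · rw [hneg _ _ (Or.inr (by omega)), hneg _ _ (Or.inl (by omega))]
          · exact ih (s - 1) (by omega) x (y - 1) hx (by omega) (by omega)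
        rw [hrec x y hx hy h0, hrec y x hy hx (by tauto), e1, e2, Nat.add_comm]
  intro x y
  rcases le_or_gt 0 x with hx | hx
  · rcases le_or_gt 0 y with hy | hy
    · exact key (x + y).toNat x y hx hy (by omega)
    · rw [hneg _ _ (Or.inr hy), hneg _ _ (Or.inl hy)]
  · rw [hneg _ _ (Or.inl hx), hneg _ _ (Or.inr hx)]

theorem aux_master (F : ℤ → ℤ → ℕ)
    (hneg : ∀ x y : ℤ, x < 0 ∨ y < 0 → F x y = 0)
    (hrec : ∀ x y : ℤ, 0 ≤ x → 0 ≤ y → ¬(x = 0 ∧ y = 0) →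
      F x y = F (x - 1) y / 2 + F x (y - 1) / 2)
    (hsymm : ∀ x y : ℤ, F x y = F y x) :
    ∀ s : ℕ, ∀ x y : ℤ, 0 ≤ x → x ≤ y → x + y = s →
      F (x - 1) (y + 1) ≤ F x y ∧
        (1 ≤ F (x - 1) (y + 1) → 2 * (F (x - 1) (y + 1) / 2) + 2 ≤ F x y) := by
  intro s
  induction s using Nat.strong_induction_on with
  | _ s ih =>
    intro x y hx hxy hs
    have hy : 0 ≤ y := le_trans hx hxy
    rcases eq_or_lt_of_le hx with h0 | h0
    · have hz : F (x - 1) (y + 1) = 0 := hneg _ _ (Or.inl (by omega))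
      refine ⟨by rw [hz]; exact Nat.zero_le _, by rw [hz]; omega⟩
    · have hx1 : 1 ≤ x := h0
      have hu : F (x - 1) (y + 1) = F (x - 2) (y + 1) / 2 + F (x - 1) y / 2 := by
        have h := hrec (x - 1) (y + 1) (by omega) (by omega) (by omega)
        rw [show x - 1 - 1 = x - 2 by ring, show y + 1 - 1 = y by ring] at h
        exact h
      have hv : F x y = F (x - 1) y / 2 + F x (y - 1) / 2 := hrec x y hx hy (by omega)
      have IH1 := ih (s - 1) (by omega) (x - 1) y (by omega) (by omega) (by omega)
      rw [show x - 1 - 1 = x - 2 by ring] at IH1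
      rcases eq_or_lt_of_le hxy with hcen | hlt
      · subst hcen
        have hb : F x (x - 1) = F (x - 1) x := hsymm _ _
        rw [hu, hv, hb]
        omega
      · have IH2 := ih (s - 1) (by omega) x (y - 1) hx (by omega) (by omega)
        rw [show y - 1 + 1 = y by ring] at IH2
        rw [hu, hv]
        omega

theorem aux_chain (F : ℤ → ℤ → ℕ)
    (hmaster : ∀ x y : ℤ, 0 ≤ x → x ≤ y →
      F (x - 1) (y + 1) ≤ F x y ∧
        (1 ≤ F (x - 1) (y + 1) → 2 * (F (x - 1) (y + 1) / 2) + 2 ≤ F x y)) :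
    ∀ d : ℕ, ∀ x k : ℤ, 0 ≤ x → x + d = k → d ≠ 0 →
      F x (2 * k - x) ≠ 0 → F x (2 * k - x) < F k k := by
  intro d
  induction d with
  | zero => intro x k _ _ h; exact absurd rfl h
  | succ d ihd =>
    intro x k hx hk _ hnz
    have hm := hmaster (x + 1) (2 * k - x - 1) (by omega) (by omega)
    rw [show x + 1 - 1 = x by ring, show 2 * k - x - 1 + 1 = 2 * k - x by ring] at hm
    have hlt : F x (2 * k - x) < F (x + 1) (2 * k - x - 1) := by
      have h1 : 1 ≤ F x (2 * k - x) := Nat.one_le_iff_ne_zero.mpr hnz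
      omega
    rw [show 2 * k - x - 1 = 2 * k - (x + 1) by ring] at hlt
    by_cases hd : d = 0
    · subst hd
      have hxk : x + 1 = k := by omega
      rw [hxk, show 2 * k - k = k by ring] at hlt
      exact hlt
    · exact lt_trans hlt (ihd (x + 1) k (by omega) (by omega) hd (by omega))

theorem aux_even (F : ℤ → ℤ → ℕ) (n : ℕ) (hn : 1 ≤ n)
    (hzero : F 0 0 = 2 ^ n)
    (hrec : ∀ x y : ℤ, 0 ≤ x → 0 ≤ y → ¬(x = 0 ∧ y = 0) →
      F x y = F (x - 1) y / 2 + F x (y - 1) / 2)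
    (hsymm : ∀ x y : ℤ, F x y = F y x) :
    ∀ k : ℤ, 0 ≤ k → Even (F k k) := by
  intro k hk
  rcases eq_or_lt_of_le hk with h | h
  · rw [← h, hzero]
    exact (Nat.even_pow).mpr ⟨even_two, by omega⟩
  · have hr := hrec k k (by omega) (by omega) (by omega)
    rw [hsymm k (k - 1)] at hr
    exact ⟨F (k - 1) k / 2, by omega⟩

theorem aux_pair (F : ℤ → ℤ → ℕ) (hsymm : ∀ x y : ℤ, F x y = F y x) (N : ℕ) :
    ((Finset.range (N + 1)).filter (fun a : ℕ => F (a : ℤ) ((N : ℤ) - a) ≠ 0)).card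
      = 2 * (((Finset.range (N + 1)).filter (fun a : ℕ => F (a : ℤ) ((N : ℤ) - a) ≠ 0)).filter
          (fun a => 2 * a < N)).card
        + (((Finset.range (N + 1)).filter (fun a : ℕ => F (a : ℤ) ((N : ℤ) - a) ≠ 0)).filter
          (fun a => 2 * a = N)).card := by
  set s := (Finset.range (N + 1)).filter (fun a : ℕ => F (a : ℤ) ((N : ℤ) - a) ≠ 0) with hs
  have hmem : ∀ a, a ∈ s ↔ a ≤ N ∧ F (a : ℤ) ((N : ℤ) - a) ≠ 0 := by
    intro a; rw [hs]; simp [Finset.mem_filter, Finset.mem_range]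
  have hflip : ∀ a, a ≤ N → F ((a : ℤ)) ((N : ℤ) - a) ≠ 0 → F ((N - a : ℕ) : ℤ) ((N : ℤ) - ((N - a : ℕ) : ℤ)) ≠ 0 := by
    intro a ha hnz
    have h1 : ((N - a : ℕ) : ℤ) = (N : ℤ) - a := by omega
    rw [h1, show (N : ℤ) - ((N : ℤ) - a) = a by ring, hsymm]
    exact hnz
  have hAB : (s.filter (fun a => 2 * a < N)).card = (s.filter (fun a => N < 2 * a)).card := by
    apply Finset.card_bij (fun a _ => N - a)
    · intro a ha
      simp only [Finset.mem_filter] at ha ⊢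
      obtain ⟨has, hlt⟩ := ha
      rw [hmem] at has
      rw [hmem]
      exact ⟨⟨by omega, hflip a has.1 has.2⟩, by omega⟩
    · intro a1 h1 a2 h2 h
      simp only [Finset.mem_filter] at h1 h2
      rw [hmem] at h1 h2
      omega
    · intro b hb
      simp only [Finset.mem_filter] at hb
      rw [hmem] at hb
      refine ⟨N - b, ?_, by omega⟩
      simp only [Finset.mem_filter]
      rw [hmem]
      exact ⟨⟨by omega, hflip b hb.1.1 hb.1.2⟩, by omega⟩
  have h1 : (s.filter (fun a => 2 * a < N)).card + (s.filter (fun a => ¬ 2 * a < N)).card = s.card :=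
    Finset.card_filter_add_card_filter_not _
  have h2 : ((s.filter (fun a => ¬ 2 * a < N)).filter (fun a => 2 * a = N)).card
      + ((s.filter (fun a => ¬ 2 * a < N)).filter (fun a => ¬ 2 * a = N)).card
      = (s.filter (fun a => ¬ 2 * a < N)).card :=
    Finset.card_filter_add_card_filter_not _
  have e1 : (s.filter (fun a => ¬ 2 * a < N)).filter (fun a => 2 * a = N)
      = s.filter (fun a => 2 * a = N) := by
    ext a
    simp only [Finset.mem_filter]
    constructor
    · rintro ⟨⟨h, _⟩, hq⟩; exact ⟨h, hq⟩
    · rintro ⟨h, hq⟩; exact ⟨⟨h, by omega⟩, hq⟩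
  have e2 : (s.filter (fun a => ¬ 2 * a < N)).filter (fun a => ¬ 2 * a = N)
      = s.filter (fun a => N < 2 * a) := by
    ext a
    simp only [Finset.mem_filter]
    constructor
    · rintro ⟨⟨h, hp⟩, hq⟩; exact ⟨h, by omega⟩
    · rintro ⟨h, hq⟩; exact ⟨⟨h, by omega⟩, by omega⟩
  rw [e1, e2] at h2
  omega
theorem stmt16 (n : ℕ) (hn : 1 ≤ n) (F : ℤ → ℤ → ℕ)
    (hneg : ∀ x y : ℤ, x < 0 ∨ y < 0 → F x y = 0)
    (hzero : F 0 0 = 2 ^ n)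
    (hrec : ∀ x y : ℤ, 0 ≤ x → 0 ≤ y → ¬(x = 0 ∧ y = 0) →
      F x y = F (x - 1) y / 2 + F x (y - 1) / 2) :
    (∀ k : ℕ,
      (∃ x y : ℤ, x + y = 2 * (k : ℤ) ∧ F x y ≠ 0) →
      Odd (((Finset.range (2 * k + 1)).filter
        (fun a : ℕ => F (a : ℤ) (2 * (k : ℤ) - a) ≠ 0)).card) →
      Even (F (k : ℤ) (k : ℤ)) ∧ 2 ≤ F (k : ℤ) (k : ℤ) ∧
      (∀ x y : ℤ, x + y = 2 * (k : ℤ) → ¬(x = (k : ℤ) ∧ y = (k : ℤ)) →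
        F x y ≠ 0 → F x y < F (k : ℤ) (k : ℤ)) ∧
      (∃ x y : ℤ, x + y = 2 * (k : ℤ) + 1 ∧ F x y ≠ 0)) ∧
    (∀ N : ℕ,
      (∃ x y : ℤ, x + y = (N : ℤ) ∧ F x y ≠ 0) →
      (∀ x y : ℤ, x + y = (N : ℤ) + 1 → F x y = 0) →
      Even (((Finset.range (N + 1)).filter
        (fun a : ℕ => F (a : ℤ) ((N : ℤ) - a) ≠ 0)).card) ∧ Odd N) := by
  have hsymm := aux_symm F hneg hrec
  have hmaster : ∀ x y : ℤ, 0 ≤ x → x ≤ y →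
      F (x - 1) (y + 1) ≤ F x y ∧
        (1 ≤ F (x - 1) (y + 1) → 2 * (F (x - 1) (y + 1) / 2) + 2 ≤ F x y) :=
    fun x y hx hxy => aux_master F hneg hrec hsymm (x + y).toNat x y hx hxy (by omega)
  have hchain := aux_chain F hmaster
  have heven := aux_even F n hn hzero hrec hsymm
  have hpos : ∀ x y : ℤ, F x y ≠ 0 → 0 ≤ x ∧ 0 ≤ y := by
    intro x y h
    constructor <;> by_contra hc <;> exact h (hneg x y (by omega))
  -- any nonzero off-center entry of row 2k is < F k k
  have hoff : ∀ (k : ℕ) (x y : ℤ), x + y = 2 * (k : ℤ) → ¬(x = (k : ℤ) ∧ y = (k : ℤ)) →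
      F x y ≠ 0 → F x y < F (k : ℤ) (k : ℤ) := by
    intro k x y hxy hne hnz
    obtain ⟨hx, hy⟩ := hpos x y hnz
    rcases lt_trichotomy x (k : ℤ) with h | h | h
    · have hc := hchain ((k : ℤ) - x).toNat x k hx (by omega) (by omega)
      rw [show 2 * (k : ℤ) - x = y by omega] at hc
      exact hc hnz
    · exact absurd ⟨h, by omega⟩ hne
    · have hnz' : F y x ≠ 0 := by rw [hsymm y x]; exact hnz
      have hc := hchain ((k : ℤ) - y).toNat y k hy (by omega) (by omega)
      rw [show 2 * (k : ℤ) - y = x by omega] at hc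
      rw [hsymm x y]
      exact hc hnz'
  -- set conversion for part 1
  have hsets : ∀ k : ℕ, (Finset.range (2 * k + 1)).filter
        (fun a : ℕ => F (a : ℤ) (2 * (k : ℤ) - a) ≠ 0)
      = (Finset.range (2 * k + 1)).filter
        (fun a : ℕ => F (a : ℤ) (((2 * k : ℕ) : ℤ) - a) ≠ 0) := by
    intro k
    apply Finset.filter_congr
    intro a _
    have : ((2 * k : ℕ) : ℤ) = 2 * (k : ℤ) := by push_cast; ring
    rw [this]
  have hpart1 : ∀ k : ℕ,
      (∃ x y : ℤ, x + y = 2 * (k : ℤ) ∧ F x y ≠ 0) →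
      Odd (((Finset.range (2 * k + 1)).filter
        (fun a : ℕ => F (a : ℤ) (2 * (k : ℤ) - a) ≠ 0)).card) →
      Even (F (k : ℤ) (k : ℤ)) ∧ 2 ≤ F (k : ℤ) (k : ℤ) ∧
      (∀ x y : ℤ, x + y = 2 * (k : ℤ) → ¬(x = (k : ℤ) ∧ y = (k : ℤ)) →
        F x y ≠ 0 → F x y < F (k : ℤ) (k : ℤ)) ∧
      (∃ x y : ℤ, x + y = 2 * (k : ℤ) + 1 ∧ F x y ≠ 0) := by
    intro k _ hodd
    rw [hsets k] at hodd
    rw [aux_pair F hsymm (2 * k)] at hodd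
    have hCpos : 0 < (((Finset.range (2 * k + 1)).filter
        (fun a : ℕ => F (a : ℤ) (((2 * k : ℕ) : ℤ) - a) ≠ 0)).filter
        (fun a => 2 * a = 2 * k)).card := by
      obtain ⟨m, hm⟩ := hodd; omega
    obtain ⟨a, ha⟩ := Finset.card_pos.mp hCpos
    simp only [Finset.mem_filter, Finset.mem_range] at ha
    have hak : a = k := by omega
    subst hak
    have hcent : F (a : ℤ) (a : ℤ) ≠ 0 := by
      have he : ((2 * a : ℕ) : ℤ) - (a : ℤ) = (a : ℤ) := by push_cast; ring
      rw [he] at ha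
      exact ha.1.2
    have hEv : Even (F (a : ℤ) (a : ℤ)) := heven a (by positivity)
    have h2 : 2 ≤ F (a : ℤ) (a : ℤ) := by obtain ⟨r, hr⟩ := hEv; omega
    refine ⟨hEv, h2, hoff a, ⟨(a : ℤ) + 1, (a : ℤ), by ring, ?_⟩⟩
    have hr := hrec ((a : ℤ) + 1) a (by omega) (by omega) (by omega)
    rw [show (a : ℤ) + 1 - 1 = (a : ℤ) by ring] at hr
    omega
  refine ⟨hpart1, ?_⟩
  intro N hrow hlast
  have hN : Odd N := by
    by_contra hNo
    rw [Nat.not_odd_iff_even] at hNo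
    obtain ⟨k, hk⟩ := hNo
    have hk2 : N = 2 * k := by omega
    subst hk2
    obtain ⟨x, y, hxy, hnz⟩ := hrow
    have hcent : F (k : ℤ) (k : ℤ) ≠ 0 := by
      by_cases hx : x = (k : ℤ) ∧ y = (k : ℤ)
      · rw [hx.1, hx.2] at hnz; exact hnz
      · have := hoff k x y (by push_cast at hxy ⊢; omega) hx hnz
        omega
    have hodd : Odd (((Finset.range (2 * k + 1)).filter
        (fun a : ℕ => F (a : ℤ) (2 * (k : ℤ) - a) ≠ 0)).card) := by
      rw [hsets k, aux_pair F hsymm (2 * k)]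
      have hC : ((Finset.range (2 * k + 1)).filter
          (fun a : ℕ => F (a : ℤ) (((2 * k : ℕ) : ℤ) - a) ≠ 0)).filter
          (fun a => 2 * a = 2 * k) = {k} := by
        ext a
        simp only [Finset.mem_filter, Finset.mem_range, Finset.mem_singleton]
        constructor
        · rintro ⟨_, h⟩; omega
        · rintro rfl
          refine ⟨⟨by omega, ?_⟩, rfl⟩
          have he : ((2 * a : ℕ) : ℤ) - (a : ℤ) = (a : ℤ) := by push_cast; ring
          rw [he]
          exact hcent
      rw [hC]
      simp only [Finset.card_singleton]
      exact ⟨_, rfl⟩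
    obtain ⟨x', y', hxy', hnz'⟩ := (hpart1 k ⟨x, y, by push_cast at hxy ⊢; omega, hnz⟩ hodd).2.2.2
    exact hnz' (hlast x' y' (by push_cast; omega))
  refine ⟨?_, hN⟩
  rw [aux_pair F hsymm N]
  have hC0 : (((Finset.range (N + 1)).filter
      (fun a : ℕ => F (a : ℤ) ((N : ℤ) - a) ≠ 0)).filter (fun a => 2 * a = N)).card = 0 := by
    rw [Finset.card_eq_zero]
    rw [Finset.filter_eq_empty_iff]
    intro a _
    obtain ⟨m, hm⟩ := hN
    omega
  rw [hC0]
  exact ⟨_, by ring⟩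
end
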